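/- arXiv:0902.4555 — 2 statements merged into one kernel-verified Lean document; each statement's English description precedes it below -/
import Mathlib

section
/- Let H : ℝ → ℝ be twice continuously differentiable on [0,R] satisfying 2H'' + H^3 + α·H = 0 with H'(0) = H'(R) = 0. Setting A = H(0) and B = H(R), then 4·H'(t)^2 = −(H(t) − A)·(H(t) + A)·(H(t)^2 + 2α + A^2) for all t ∈ [0,R], and consequently 0 = (B − A)(B + A)(B^2 + 2α + A^2). -/
/-!
Multiplying `2H'' + H³ + αH = 0` by `2H'` shows that the energy `4H'² + H⁴ + 2αH²` has
derivative zero, so it is constant on `[0, R]`. Since `H'(0) = 0` its value is `A⁴ + 2αA²`,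
and `A⁴ + 2αA² - H⁴ - 2αH²` factors as `-(H - A)(H + A)(H² + 2α + A²)`.
Evaluating at `R`, where `H'(R) = 0`, gives the relation between `A` and `B`.
-/

open Set

namespace ConservationFactored

noncomputable def energy (α : ℝ) (H : ℝ → ℝ) (t : ℝ) : ℝ :=
  4 * deriv H t ^ 2 + H t ^ 4 + 2 * α * H t ^ 2

theorem hasDerivAt_energy (α : ℝ) {H : ℝ → ℝ} {t : ℝ} (hH : DifferentiableAt ℝ H t)
    (hH' : DifferentiableAt ℝ (deriv H) t) :
    HasDerivAt (energy α H)
      (4 * deriv H t * (2 * deriv (deriv H) t + H t ^ 3 + α * H t)) t := by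
  have h := (((hH'.hasDerivAt.pow 2).const_mul 4).add (hH.hasDerivAt.pow 4)).add
    ((hH.hasDerivAt.pow 2).const_mul (2 * α))
  refine h.congr_deriv ?_
  push_cast
  ring

theorem energy_eq_of_ode {α a b : ℝ} {H : ℝ → ℝ} (hH : Differentiable ℝ H)
    (hH' : Differentiable ℝ (deriv H))
    (hode : ∀ t ∈ Icc a b, 2 * deriv (deriv H) t + H t ^ 3 + α * H t = 0) :
    ∀ t ∈ Icc a b, energy α H t = energy α H a := by
  have hcont : Continuous (energy α H) :=
    continuous_iff_continuousAt.2 fun t => (hasDerivAt_energy α (hH t) (hH' t)).continuousAt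
  refine constant_of_has_deriv_right_zero hcont.continuousOn fun t ht => ?_
  have h := hasDerivAt_energy α (hH t) (hH' t)
  rw [hode t (Ico_subset_Icc_self ht), mul_zero] at h
  exact h.hasDerivWithinAt

end ConservationFactored

open ConservationFactored in
/-- For a solution of `2H'' + H^3 + αH = 0` on `[0,R]` with `H'(0) = H'(R) = 0`,
setting `A = H(0)` and `B = H(R)`, the conservation law gives
`4 H'^2 = -(H-A)(H+A)(H^2 + 2α + A^2)`, and evaluating at `R` yields
`0 = (B-A)(B+A)(B^2 + 2α + A^2)`. -/
theorem conservation_factored (α R : ℝ) (hR : 0 ≤ R) (H : ℝ → ℝ)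
    (hH : ContDiff ℝ 2 H)
    (hode : ∀ t ∈ Set.Icc (0:ℝ) R, 2 * deriv (deriv H) t + (H t) ^ 3 + α * H t = 0)
    (h0 : deriv H 0 = 0) (hR' : deriv H R = 0)
    (A B : ℝ) (hA : A = H 0) (hB : B = H R) :
    (∀ t ∈ Set.Icc (0:ℝ) R,
      4 * (deriv H t) ^ 2 =
        -((H t - A) * (H t + A) * ((H t) ^ 2 + 2 * α + A ^ 2))) ∧
    0 = (B - A) * (B + A) * (B ^ 2 + 2 * α + A ^ 2) := by
  have hconst :=
    energy_eq_of_ode (hH.differentiable (by norm_num)) hH.differentiable_deriv_two hode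
  have main : ∀ t ∈ Set.Icc (0:ℝ) R,
      4 * (deriv H t) ^ 2 = -((H t - A) * (H t + A) * ((H t) ^ 2 + 2 * α + A ^ 2)) := by
    intro t ht
    have hE := hconst t ht
    simp only [energy, h0, ← hA] at hE
    linear_combination hE
  refine ⟨main, ?_⟩
  have hBR := main R ⟨hR, le_rfl⟩
  rw [hR', ← hB] at hBR
  linear_combination -hBR
end

section
/- If H : ℝ → ℝ satisfies 2H''(t) + H(t)^3 + α·H(t) = 0 on [0,R], H'(0) = H'(R) = 0, H is non-constant, and A = H(0), B = H(R) with A ≠ B and A ≠ −B, then B^2 + 2α + A^2 = 0, hence α = −(A^2 + B^2)/2 ≤ 0. -/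
/-- For a non-constant solution of `2H'' + H^3 + αH = 0` on `[0,R]` with
`H'(0) = H'(R) = 0`, `A = H(0)`, `B = H(R)`, `A ≠ B` and `A ≠ -B`, one gets
`B^2 + 2α + A^2 = 0`, hence `α = -(A^2+B^2)/2 ≤ 0`. -/
theorem alpha_nonpositive (α R : ℝ) (hR : 0 ≤ R) (H : ℝ → ℝ)
    (hH : ContDiff ℝ 2 H)
    (hode : ∀ t ∈ Set.Icc (0:ℝ) R, 2 * deriv (deriv H) t + (H t) ^ 3 + α * H t = 0)
    (h0 : deriv H 0 = 0) (hR' : deriv H R = 0)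
    (hnc : ∃ s ∈ Set.Icc (0:ℝ) R, ∃ t ∈ Set.Icc (0:ℝ) R, H s ≠ H t)
    (A B : ℝ) (hA : A = H 0) (hB : B = H R) (hAB : A ≠ B) (hAB' : A ≠ -B) :
    B ^ 2 + 2 * α + A ^ 2 = 0 ∧ α = -(A ^ 2 + B ^ 2) / 2 ∧ α ≤ 0 := by
  have hH1 : Differentiable ℝ H := hH.differentiable (by norm_num)
  have hH' : Differentiable ℝ (deriv H) := by
    have : ContDiff ℝ 1 (deriv H) := (contDiff_succ_iff_deriv.mp (show ContDiff ℝ (1+1) H by norm_num; exact hH)).2.2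
    exact this.differentiable (by norm_num)
  set E : ℝ → ℝ := fun t => (deriv H t) ^ 2 + (H t) ^ 4 / 4 + α * (H t) ^ 2 / 2 with hE
  have hder : ∀ t ∈ Set.Icc (0:ℝ) R, HasDerivAt E 0 t := by
    intro t ht
    have h1 : HasDerivAt H (deriv H t) t := (hH1 t).hasDerivAt
    have h2 : HasDerivAt (deriv H) (deriv (deriv H) t) t := (hH' t).hasDerivAt
    have hD : HasDerivAt E
        (2 * deriv H t * deriv (deriv H) t + 4 * (H t) ^ 3 * deriv H t / 4
          + α * (2 * H t * deriv H t) / 2) t := by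
      exact (((h2.pow 2).add ((h1.pow 4).div_const 4)).add
        (((h1.pow 2).const_mul α).div_const 2)).congr_deriv (by ring)
    have := hode t ht
    have hz : 2 * deriv H t * deriv (deriv H) t + 4 * (H t) ^ 3 * deriv H t / 4
        + α * (2 * H t * deriv H t) / 2 = 0 := by
      have : deriv H t * (2 * deriv (deriv H) t + (H t) ^ 3 + α * H t) = 0 := by
        rw [this]; ring
      nlinarith [this]
    rwa [hz] at hD
  have hcont : ContinuousOn E (Set.Icc 0 R) := by
    apply Continuous.continuousOn
    have : Continuous (deriv H) := hH'.continuous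
    fun_prop
  have hconst : E R = E 0 := by
    have := constant_of_has_deriv_right_zero hcont (fun x hx =>
      (hder x ⟨hx.1, le_of_lt hx.2⟩).hasDerivWithinAt) R (Set.right_mem_Icc.mpr hR)
    exact this
  have hE0 : E 0 = A ^ 4 / 4 + α * A ^ 2 / 2 := by simp [hE, h0, hA]
  have hER : E R = B ^ 4 / 4 + α * B ^ 2 / 2 := by simp [hE, hR', hB]
  have key : (A ^ 2 - B ^ 2) * (A ^ 2 + B ^ 2 + 2 * α) = 0 := by
    rw [hE0, hER] at hconst; nlinarith [hconst]
  have hne : A ^ 2 - B ^ 2 ≠ 0 := by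
    intro h
    have : (A - B) * (A + B) = 0 := by ring_nf; linarith [h]
    rcases mul_eq_zero.mp this with h1 | h1
    · exact hAB (by linarith)
    · exact hAB' (by linarith)
  have hsum : A ^ 2 + B ^ 2 + 2 * α = 0 := by
    rcases mul_eq_zero.mp key with h | h
    · exact absurd h hne
    · exact h
  refine ⟨by linarith, by linarith, by nlinarith [sq_nonneg A, sq_nonneg B]⟩
end
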